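/- The pick–freeze estimator Ŝ_i is strongly consistent: if (X^k, X'^k) are i.i.d. samples, y_k = f(X^k), y'_k = f(X'^k with i-th coordinate replaced by X^k_i), and f(X) is square-integrable with Var(f(X)) > 0, then Ŝ_i = (N^{-1}∑ y_k y'_k − (N^{-1}∑ y_k)(N^{-1}∑ y'_k)) / (N^{-1}∑ y_k² − (N^{-1}∑ y_k)²) converges almost surely to S_i as N → ∞. -/

import Mathlib

open MeasureTheory ProbabilityTheory Filter Topology

section PickFreezeAux

lemma variance_congr_ae' {Ω : Type*} {mΩ : MeasurableSpace Ω} {μ : Measure Ω} {X Y : Ω → ℝ}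
    (h : X =ᵐ[μ] Y) : variance X μ = variance Y μ := by
  have hi : μ[X] = μ[Y] := integral_congr_ae h
  unfold variance evariance
  rw [hi]
  congr 1
  apply lintegral_congr_ae
  filter_upwards [h] with ω hω
  rw [hω]

lemma integrable_mul_of_memL2 {Ω : Type*} {mΩ : MeasurableSpace Ω} {μ : Measure Ω}
    {F G : Ω → ℝ} (hF : MemLp F 2 μ) (hG : MemLp G 2 μ) :
    Integrable (fun x => F x * G x) μ := by
  refine Integrable.mono' (hF.integrable_sq.add hG.integrable_sq) (hF.1.mul hG.1) ?_
  filter_upwards with x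
  have h : |F x * G x| ≤ F x ^ 2 + G x ^ 2 := by
    rw [abs_mul]
    nlinarith [sq_nonneg (|F x| - |G x|), sq_abs (F x), sq_abs (G x), abs_nonneg (F x),
      abs_nonneg (G x)]
  simpa [Real.norm_eq_abs, abs_mul] using h

/-- strong law helper -/
lemma slln_comp {Ω : Type*} [MeasurableSpace Ω] {μ : Measure Ω}
    {β : Type*} [MeasurableSpace β] {W : ℕ → Ω → β}
    (hWmeas : ∀ k, Measurable (W k))
    (hWindep : iIndepFun (m := fun _ => (inferInstance : MeasurableSpace β)) W μ)
    {π : Measure β} (hWlaw : ∀ k, Measure.map (W k) μ = π)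
    {h : β → ℝ} (hh : Measurable h) (hint : Integrable h π) :
    ∀ᵐ ω ∂μ, Tendsto (fun n : ℕ => (1 / n : ℝ) * ∑ k ∈ Finset.range n, h (W k ω)) atTop
      (𝓝 (∫ x, h x ∂π)) := by
  set X : ℕ → Ω → ℝ := fun k => h ∘ W k with hX
  have hindep : Pairwise (Function.onFun (IndepFun · · μ) X) := fun a b hab =>
    (hWindep.indepFun hab).comp hh hh
  have hident : ∀ k, IdentDistrib (X k) (X 0) μ μ := fun k =>
    ⟨(hh.comp (hWmeas k)).aemeasurable, (hh.comp (hWmeas 0)).aemeasurable, by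
      rw [hX]
      rw [← Measure.map_map hh (hWmeas k), ← Measure.map_map hh (hWmeas 0), hWlaw k, hWlaw 0]⟩
  have hint0 : Integrable (X 0) μ := by
    have := (integrable_map_measure (by rw [hWlaw 0]; exact hint.1)
      (hWmeas 0).aemeasurable).mp (by rw [hWlaw 0]; exact hint)
    exact this
  have hexp : μ[X 0] = ∫ x, h x ∂π := by
    rw [← hWlaw 0, integral_map (hWmeas 0).aemeasurable (by rw [hWlaw 0]; exact hint.1)]
    rfl
  filter_upwards [strong_law_ae X hint0 hindep hident] with ω hω
  rw [hexp] at hω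
  have heq : (fun n : ℕ => (1 / n : ℝ) * ∑ k ∈ Finset.range n, h (W k ω))
      = fun n : ℕ => (n : ℝ)⁻¹ • ∑ k ∈ Finset.range n, X k ω := by
    funext n
    simp [hX, smul_eq_mul, one_div, Function.comp]
  rw [heq]
  exact hω

variable {p : ℕ} (νi : Fin p → Measure ℝ) [∀ j, IsProbabilityMeasure (νi j)] (i : Fin p)

lemma measurable_phi : Measurable (fun q : ℝ × (Fin p → ℝ) => Function.update q.2 i q.1) :=
  measurable_update'.comp (measurable_snd.prodMk measurable_fst)

lemma map_phi :
    Measure.map (fun q : ℝ × (Fin p → ℝ) => Function.update q.2 i q.1)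
      ((νi i).prod (Measure.pi νi)) = Measure.pi νi := by
  refine (Measure.pi_eq fun s hs => ?_).symm
  rw [Measure.map_apply (measurable_phi i) (MeasurableSet.univ_pi hs)]
  have hpre : (fun q : ℝ × (Fin p → ℝ) => Function.update q.2 i q.1) ⁻¹' Set.pi Set.univ s
      = s i ×ˢ Set.pi Set.univ (Function.update s i Set.univ) := by
    ext ⟨t, x⟩
    simp only [Set.mem_preimage, Set.mem_pi, Set.mem_univ, true_implies, Set.mem_prod]
    constructor
    · intro h
      refine ⟨by simpa using h i, fun j => ?_⟩
      rcases eq_or_ne j i with rfl | hj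
      · simp
      · simpa [Function.update_of_ne hj] using h j
    · rintro ⟨h1, h2⟩ j
      rcases eq_or_ne j i with rfl | hj
      · simpa using h1
      · have := h2 j
        rw [Function.update_of_ne hj] at this ⊢
        exact this
  rw [hpre, Measure.prod_prod, Measure.pi_pi,
    ← Finset.mul_prod_erase Finset.univ (fun j => νi j (s j)) (Finset.mem_univ i),
    ← Finset.mul_prod_erase Finset.univ
      (fun j => νi j (Function.update s i Set.univ j)) (Finset.mem_univ i)]
  simp only [Function.update_self, measure_univ, one_mul]
  congr 1
  refine Finset.prod_congr rfl fun j hj => ?_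
  rw [Function.update_of_ne (Finset.ne_of_mem_erase hj)]

lemma map_eval : Measure.map (fun x : Fin p → ℝ => x i) (Measure.pi νi) = νi i := by
  ext s hs
  rw [Measure.map_apply (measurable_pi_apply i) hs]
  have hpre : (fun x : Fin p → ℝ => x i) ⁻¹' s
      = Set.pi Set.univ (Function.update (fun _ => Set.univ) i s) := by
    ext x
    simp only [Set.mem_preimage, Set.mem_pi, Set.mem_univ, true_implies]
    constructor
    · intro h j
      rcases eq_or_ne j i with rfl | hj
      · simpa using h
      · simp [Function.update_of_ne hj]
    · intro h
      simpa using h i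
  rw [hpre, Measure.pi_pi,
    Fintype.prod_eq_single i (fun j hj => by simp [Function.update_of_ne hj])]
  simp

lemma map_psi :
    Measure.map (fun w : (Fin p → ℝ) × (Fin p → ℝ) => Function.update w.2 i (w.1 i))
      ((Measure.pi νi).prod (Measure.pi νi)) = Measure.pi νi := by
  have h1 : (fun w : (Fin p → ℝ) × (Fin p → ℝ) => Function.update w.2 i (w.1 i))
      = (fun q : ℝ × (Fin p → ℝ) => Function.update q.2 i q.1)
        ∘ (Prod.map (fun x : Fin p → ℝ => x i) id) := rfl
  rw [h1, ← Measure.map_map (measurable_phi i)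
      ((measurable_pi_apply i).prodMap measurable_id),
    ← Measure.map_prod_map _ _ (measurable_pi_apply i) measurable_id,
    map_eval, Measure.map_id]
  exact map_phi νi i

/-- the conditional-mean kernel `g t = ∫ f(x with x_i := t) dν(x)` -/
noncomputable def pfG (f : (Fin p → ℝ) → ℝ) : ℝ → ℝ :=
  fun t => ∫ x, f (Function.update x i t) ∂(Measure.pi νi)

variable {f : (Fin p → ℝ) → ℝ}

lemma stronglyMeasurable_pfG (hf : Measurable f) : StronglyMeasurable (pfG νi i f) :=
  (hf.comp (measurable_phi i)).stronglyMeasurable.integral_prod_right'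

lemma memL2_comp_phi (hf : Measurable f) (hf2 : MemLp f 2 (Measure.pi νi)) :
    MemLp (fun q : ℝ × (Fin p → ℝ) => f (Function.update q.2 i q.1)) 2
      ((νi i).prod (Measure.pi νi)) := by
  have h0 : MemLp f 2 (Measure.map (fun q : ℝ × (Fin p → ℝ) => Function.update q.2 i q.1)
      ((νi i).prod (Measure.pi νi))) := by rw [map_phi]; exact hf2
  exact (memLp_map_measure_iff (by rw [map_phi]; exact hf.aestronglyMeasurable)
    (measurable_phi i).aemeasurable).mp h0

lemma memL2_comp_psi (hf : Measurable f) (hf2 : MemLp f 2 (Measure.pi νi)) :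
    MemLp (fun w : (Fin p → ℝ) × (Fin p → ℝ) => f (Function.update w.2 i (w.1 i))) 2
      ((Measure.pi νi).prod (Measure.pi νi)) := by
  have h0 : MemLp f 2 (Measure.map
      (fun w : (Fin p → ℝ) × (Fin p → ℝ) => Function.update w.2 i (w.1 i))
      ((Measure.pi νi).prod (Measure.pi νi))) := by rw [map_psi]; exact hf2
  have hψ : Measurable (fun w : (Fin p → ℝ) × (Fin p → ℝ) =>
      Function.update w.2 i (w.1 i)) :=
    measurable_update'.comp (measurable_snd.prodMk (measurable_fst.eval))
  exact (memLp_map_measure_iff (by rw [map_psi]; exact hf.aestronglyMeasurable)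
    hψ.aemeasurable).mp h0

lemma map_fst_pi :
    Measure.map (Prod.fst : (Fin p → ℝ) × (Fin p → ℝ) → (Fin p → ℝ))
      ((Measure.pi νi).prod (Measure.pi νi)) = Measure.pi νi := by
  rw [Measure.map_fst_prod]; simp

lemma memL2_comp_fst (hf : Measurable f) (hf2 : MemLp f 2 (Measure.pi νi)) :
    MemLp (fun w : (Fin p → ℝ) × (Fin p → ℝ) => f w.1) 2
      ((Measure.pi νi).prod (Measure.pi νi)) := by
  have h0 : MemLp f 2 (Measure.map (Prod.fst : (Fin p → ℝ) × (Fin p → ℝ) → (Fin p → ℝ))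
      ((Measure.pi νi).prod (Measure.pi νi))) := by rw [map_fst_pi]; exact hf2
  exact (memLp_map_measure_iff (by rw [map_fst_pi]; exact hf.aestronglyMeasurable)
    measurable_fst.aemeasurable).mp h0

lemma memL2_pfG (hf : Measurable f) (hf2 : MemLp f 2 (Measure.pi νi)) :
    MemLp (pfG νi i f) 2 (νi i) := by
  have hsm := stronglyMeasurable_pfG νi i hf
  refine (memLp_two_iff_integrable_sq hsm.aestronglyMeasurable).mpr ?_
  have hsq : Integrable (fun q : ℝ × (Fin p → ℝ) => f (Function.update q.2 i q.1) ^ 2)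
      ((νi i).prod (Measure.pi νi)) := (memL2_comp_phi νi i hf hf2).integrable_sq
  have hmaj : Integrable (fun t => ∫ x, f (Function.update x i t) ^ 2 ∂(Measure.pi νi))
      (νi i) := hsq.integral_prod_left
  have hae : ∀ᵐ t ∂(νi i),
      Integrable (fun x => f (Function.update x i t) ^ 2) (Measure.pi νi) :=
    hsq.prod_right_ae
  refine Integrable.mono' hmaj ((hsm.mul hsm).aestronglyMeasurable.congr ?_) ?_
  · filter_upwards with t
    simp [sq]
  · filter_upwards [hae] with t ht
    have hsec : Measurable fun x : Fin p → ℝ => f (Function.update x i t) :=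
      hf.comp ((measurable_phi i).comp (measurable_const.prodMk measurable_id))
    have hmem : MemLp (fun x => f (Function.update x i t)) 2 (Measure.pi νi) :=
      (memLp_two_iff_integrable_sq hsec.aestronglyMeasurable).mpr ht
    have hvar := variance_nonneg (fun x => f (Function.update x i t)) (Measure.pi νi)
    rw [variance_eq_sub hmem] at hvar
    have h1 : (∫ x, f (Function.update x i t) ∂(Measure.pi νi)) ^ 2
        ≤ ∫ x, f (Function.update x i t) ^ 2 ∂(Measure.pi νi) := by
      have : (Measure.pi νi)[(fun x => f (Function.update x i t)) ^ 2]
          = ∫ x, f (Function.update x i t) ^ 2 ∂(Measure.pi νi) := by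
        apply integral_congr_ae; filter_upwards with x; simp
      linarith [hvar, this ▸ hvar]
    calc ‖pfG νi i f t ^ 2‖ = (∫ x, f (Function.update x i t) ∂(Measure.pi νi)) ^ 2 := by
          rw [Real.norm_eq_abs, abs_of_nonneg (sq_nonneg _)]; rfl
      _ ≤ ∫ x, f (Function.update x i t) ^ 2 ∂(Measure.pi νi) := h1

lemma integral_phi (h : (Fin p → ℝ) → ℝ) (hh : AEStronglyMeasurable h (Measure.pi νi)) :
    ∫ x, h x ∂(Measure.pi νi)
      = ∫ q, h (Function.update q.2 i q.1) ∂((νi i).prod (Measure.pi νi)) := by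
  conv_lhs => rw [← map_phi νi i]
  exact integral_map (measurable_phi i).aemeasurable (by rw [map_phi]; exact hh)

lemma integral_eval (h : ℝ → ℝ) (hh : AEStronglyMeasurable h (νi i)) :
    ∫ x, h (x i) ∂(Measure.pi νi) = ∫ t, h t ∂(νi i) := by
  conv_rhs => rw [← map_eval νi i]
  exact (integral_map (measurable_pi_apply i).aemeasurable
    (by rw [map_eval]; exact hh)).symm

lemma memL2_pfG_eval (hf : Measurable f) (hf2 : MemLp f 2 (Measure.pi νi)) :
    MemLp (fun x : Fin p → ℝ => pfG νi i f (x i)) 2 (Measure.pi νi) := by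
  have h0 : MemLp (pfG νi i f) 2
      (Measure.map (fun x : Fin p → ℝ => x i) (Measure.pi νi)) := by
    rw [map_eval]; exact memL2_pfG νi i hf hf2
  exact (memLp_map_measure_iff (μ := Measure.pi νi) (f := fun x : Fin p → ℝ => x i)
    (by rw [map_eval]; exact (stronglyMeasurable_pfG νi i hf).aestronglyMeasurable)
    (measurable_pi_apply i).aemeasurable).mp h0

lemma condexp_eq_pfG (hf : Measurable f) (hf2 : MemLp f 2 (Measure.pi νi)) :
    (Measure.pi νi)[f | MeasurableSpace.comap (fun x => x i) inferInstance]
      =ᵐ[Measure.pi νi] fun x => pfG νi i f (x i) := by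
  have hm : MeasurableSpace.comap (fun x : Fin p → ℝ => x i) inferInstance
      ≤ MeasurableSpace.pi := (measurable_pi_apply i).comap_le
  have hfint : Integrable f (Measure.pi νi) := hf2.integrable one_le_two
  have hgint : Integrable (fun x : Fin p → ℝ => pfG νi i f (x i)) (Measure.pi νi) :=
    (memL2_pfG_eval νi i hf hf2).integrable one_le_two
  refine (ae_eq_condExp_of_forall_setIntegral_eq hm hfint
    (fun s _ _ => hgint.integrableOn) ?_ ?_).symm
  · rintro s ⟨B, hB, rfl⟩ -
    have hL : ∫ x in (fun x : Fin p → ℝ => x i) ⁻¹' B, pfG νi i f (x i) ∂(Measure.pi νi)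
        = ∫ t in B, pfG νi i f t ∂(νi i) := by
      conv_rhs => rw [← map_eval νi i]
      rw [setIntegral_map hB
        (by rw [map_eval]; exact (stronglyMeasurable_pfG νi i hf).aestronglyMeasurable)
        (measurable_pi_apply i).aemeasurable]
    have hR : ∫ x in (fun x : Fin p → ℝ => x i) ⁻¹' B, f x ∂(Measure.pi νi)
        = ∫ t in B, pfG νi i f t ∂(νi i) := by
      conv_lhs => rw [← map_phi νi i]
      rw [setIntegral_map (hB.preimage (measurable_pi_apply i))
        (by rw [map_phi]; exact hf.aestronglyMeasurable) (measurable_phi i).aemeasurable]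
      have hpre : (fun q : ℝ × (Fin p → ℝ) => Function.update q.2 i q.1) ⁻¹'
          ((fun x : Fin p → ℝ => x i) ⁻¹' B) = B ×ˢ Set.univ := by
        ext ⟨t, x⟩
        simp [Function.update_self]
      rw [hpre, setIntegral_prod _
        (((memL2_comp_phi νi i hf hf2).integrable one_le_two).integrableOn)]
      simp only [Measure.restrict_univ]
      rfl
    rw [hL, hR]
  · exact StronglyMeasurable.aestronglyMeasurable
      ((stronglyMeasurable_pfG νi i hf).comp_measurable
        (measurable_iff_comap_le.mpr le_rfl))

lemma integral_pick_freeze (hf : Measurable f) (hf2 : MemLp f 2 (Measure.pi νi)) :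
    ∫ w, f w.1 * f (Function.update w.2 i (w.1 i))
      ∂((Measure.pi νi).prod (Measure.pi νi))
      = ∫ t, pfG νi i f t ^ 2 ∂(νi i) := by
  have hint : Integrable (fun w : (Fin p → ℝ) × (Fin p → ℝ) =>
      f w.1 * f (Function.update w.2 i (w.1 i))) ((Measure.pi νi).prod (Measure.pi νi)) :=
    integrable_mul_of_memL2 (memL2_comp_fst νi hf hf2) (memL2_comp_psi νi i hf hf2)
  rw [integral_prod _ hint]
  simp_rw [integral_const_mul]
  have hint2 : Integrable (fun x : Fin p → ℝ => f x * pfG νi i f (x i)) (Measure.pi νi) :=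
    integrable_mul_of_memL2 hf2 (memL2_pfG_eval νi i hf hf2)
  have hstep : ∫ x, f x * pfG νi i f (x i) ∂(Measure.pi νi)
      = ∫ q, f (Function.update q.2 i q.1) * pfG νi i f q.1
          ∂((νi i).prod (Measure.pi νi)) := by
    rw [integral_phi νi i _ hint2.1]
    simp only [Function.update_self]
  have hdef : ∫ (x : Fin p → ℝ),
        (f x * ∫ (a : Fin p → ℝ), f (Function.update a i (x i)) ∂(Measure.pi νi))
        ∂(Measure.pi νi)
      = ∫ x, f x * pfG νi i f (x i) ∂(Measure.pi νi) := rfl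
  rw [hdef, hstep]
  have hint3 : Integrable (fun q : ℝ × (Fin p → ℝ) =>
      f (Function.update q.2 i q.1) * pfG νi i f q.1) ((νi i).prod (Measure.pi νi)) := by
    have h0 : Integrable (fun x : Fin p → ℝ => f x * pfG νi i f (x i))
        (Measure.map (fun q : ℝ × (Fin p → ℝ) => Function.update q.2 i q.1)
          ((νi i).prod (Measure.pi νi))) := by rw [map_phi]; exact hint2
    have h1 := (integrable_map_measure (by rw [map_phi]; exact hint2.1)
      (measurable_phi i).aemeasurable).mp h0
    simpa [Function.comp_def, Function.update_self] using h1
  rw [integral_prod _ hint3]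
  simp_rw [integral_mul_const]
  refine integral_congr_ae (Filter.Eventually.of_forall fun t => ?_)
  simp only [pow_two]
  rfl

end PickFreezeAux

/-- strong consistency of the pick–freeze estimator `Ŝ_i`: with i.i.d. sample
pairs `(X^k, X'^k)` drawn from the input distribution (product of the independent
components' laws), `y_k = f(X^k)`, `y'_k = f(X'^k` with `i`-th coordinate replaced by
`X^k_i)`, and `f` square-integrable non-degenerate, the estimator converges almost surely
to `S_i = Var(E[Y|X_i])/Var(Y)`. -/
theorem pick_freeze_estimator_strongly_consistent
    {Ω : Type*} [MeasurableSpace Ω] {μ : Measure Ω} [IsProbabilityMeasure μ]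
    {p : ℕ} (νi : Fin p → Measure ℝ) [∀ i, IsProbabilityMeasure (νi i)]
    (f : (Fin p → ℝ) → ℝ) (hf : Measurable f)
    (hf2 : MemLp f 2 (Measure.pi νi)) (hVar : 0 < variance f (Measure.pi νi))
    (i : Fin p)
    (W : ℕ → Ω → (Fin p → ℝ) × (Fin p → ℝ))
    (hWmeas : ∀ k, Measurable (W k))
    (hWindep : iIndepFun (m := fun _ => (inferInstance : MeasurableSpace ((Fin p → ℝ) × (Fin p → ℝ)))) W μ)
    (hWlaw : ∀ k, Measure.map (W k) μ = (Measure.pi νi).prod (Measure.pi νi))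
    (y y' : ℕ → Ω → ℝ)
    (hy : ∀ k ω, y k ω = f (W k ω).1)
    (hy' : ∀ k ω, y' k ω = f (Function.update (W k ω).2 i ((W k ω).1 i))) :
    ∀ᵐ ω ∂μ, Tendsto
      (fun N : ℕ =>
        ((1 / N : ℝ) * ∑ k ∈ Finset.range N, y k ω * y' k ω -
            ((1 / N : ℝ) * ∑ k ∈ Finset.range N, y k ω) *
              ((1 / N : ℝ) * ∑ k ∈ Finset.range N, y' k ω)) /
          ((1 / N : ℝ) * ∑ k ∈ Finset.range N, (y k ω) ^ 2 -
            ((1 / N : ℝ) * ∑ k ∈ Finset.range N, y k ω) ^ 2))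
      atTop
      (nhds (variance
          ((Measure.pi νi)[f | MeasurableSpace.comap (fun x => x i) inferInstance])
          (Measure.pi νi) / variance f (Measure.pi νi))) := by
  have hψ : Measurable (fun w : (Fin p → ℝ) × (Fin p → ℝ) =>
      Function.update w.2 i (w.1 i)) :=
    measurable_update'.comp (measurable_snd.prodMk (measurable_fst.eval))
  set I1 : ℝ := ∫ x, f x ∂(Measure.pi νi) with hI1
  set I2 : ℝ := ∫ x, f x ^ 2 ∂(Measure.pi νi) with hI2
  set IG : ℝ := ∫ t, pfG νi i f t ^ 2 ∂(νi i) with hIG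
  -- transfer integrals over the product measure
  have hIfst : ∀ (h3 : (Fin p → ℝ) → ℝ), AEStronglyMeasurable h3 (Measure.pi νi) →
      ∫ w, h3 w.1 ∂((Measure.pi νi).prod (Measure.pi νi)) = ∫ x, h3 x ∂(Measure.pi νi) := by
    intro h3 hh3
    conv_rhs => rw [← map_fst_pi νi]
    exact (integral_map measurable_fst.aemeasurable (by rw [map_fst_pi]; exact hh3)).symm
  have hIpsi : ∫ w, f (Function.update w.2 i (w.1 i))
      ∂((Measure.pi νi).prod (Measure.pi νi)) = I1 := by
    rw [hI1]
    conv_rhs => rw [← map_psi νi i]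
    exact (integral_map hψ.aemeasurable
      (by rw [map_psi]; exact hf.aestronglyMeasurable)).symm
  -- conditional expectation variance
  have hm : MeasurableSpace.comap (fun x : Fin p → ℝ => x i) inferInstance
      ≤ MeasurableSpace.pi := (measurable_pi_apply i).comap_le
  have hgmem := memL2_pfG_eval νi i hf hf2
  have hgI1 : ∫ x, pfG νi i f (x i) ∂(Measure.pi νi) = I1 := by
    rw [hI1, ← integral_congr_ae (condexp_eq_pfG νi i hf hf2)]
    exact integral_condExp hm
  have hgI2 : ∫ x, pfG νi i f (x i) ^ 2 ∂(Measure.pi νi) = IG := by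
    rw [hIG]
    exact integral_eval νi i (fun t => pfG νi i f t ^ 2)
      (((stronglyMeasurable_pfG νi i hf).pow 2).aestronglyMeasurable)
  have hvc : variance ((Measure.pi νi)[f | MeasurableSpace.comap
        (fun x => x i) inferInstance]) (Measure.pi νi) = IG - I1 ^ 2 := by
    rw [variance_congr_ae' (condexp_eq_pfG νi i hf hf2), variance_eq_sub hgmem]
    have ha : (Measure.pi νi)[(fun x : Fin p → ℝ => pfG νi i f (x i)) ^ 2] = IG := by
      rw [← hgI2]
      exact integral_congr_ae (Filter.Eventually.of_forall fun x => by simp)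
    rw [ha, hgI1]
  have hvf : variance f (Measure.pi νi) = I2 - I1 ^ 2 := by
    rw [variance_eq_sub hf2]
    have ha : (Measure.pi νi)[f ^ 2] = I2 := by
      rw [hI2]
      exact integral_congr_ae (Filter.Eventually.of_forall fun x => by simp)
    rw [ha, ← hI1]
  -- the four strong laws
  have hT1 := slln_comp hWmeas hWindep hWlaw
    (h := fun w : (Fin p → ℝ) × (Fin p → ℝ) => f w.1 * f (Function.update w.2 i (w.1 i)))
    ((hf.comp measurable_fst).mul (hf.comp hψ))
    (integrable_mul_of_memL2 (memL2_comp_fst νi hf hf2) (memL2_comp_psi νi i hf hf2))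
  have hT2 := slln_comp hWmeas hWindep hWlaw
    (h := fun w : (Fin p → ℝ) × (Fin p → ℝ) => f w.1)
    (hf.comp measurable_fst) ((memL2_comp_fst νi hf hf2).integrable one_le_two)
  have hT3 := slln_comp hWmeas hWindep hWlaw
    (h := fun w : (Fin p → ℝ) × (Fin p → ℝ) => f (Function.update w.2 i (w.1 i)))
    (hf.comp hψ) ((memL2_comp_psi νi i hf hf2).integrable one_le_two)
  have hT4 := slln_comp hWmeas hWindep hWlaw
    (h := fun w : (Fin p → ℝ) × (Fin p → ℝ) => f w.1 ^ 2)
    ((hf.comp measurable_fst).pow_const 2) (memL2_comp_fst νi hf hf2).integrable_sq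
  rw [integral_pick_freeze νi i hf hf2] at hT1
  rw [hIfst f hf.aestronglyMeasurable] at hT2
  rw [hIpsi] at hT3
  rw [hIfst (fun x => f x ^ 2) (hf.pow_const 2).aestronglyMeasurable] at hT4
  rw [← hI1] at hT2
  rw [← hIG] at hT1
  rw [← hI2] at hT4
  have hden_ne : I2 - I1 ^ 2 ≠ 0 := by rw [← hvf]; exact hVar.ne'
  filter_upwards [hT1, hT2, hT3, hT4] with ω h1 h2 h3 h4
  have hnum : Tendsto (fun N : ℕ =>
      (1 / N : ℝ) * ∑ k ∈ Finset.range N,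
        (f ((W k ω).1) * f (Function.update (W k ω).2 i ((W k ω).1 i))) -
      ((1 / N : ℝ) * ∑ k ∈ Finset.range N, f ((W k ω).1)) *
      ((1 / N : ℝ) * ∑ k ∈ Finset.range N, f (Function.update (W k ω).2 i ((W k ω).1 i))))
      atTop (𝓝 (IG - I1 * I1)) := h1.sub (h2.mul h3)
  have hden : Tendsto (fun N : ℕ =>
      (1 / N : ℝ) * ∑ k ∈ Finset.range N, f ((W k ω).1) ^ 2 -
      ((1 / N : ℝ) * ∑ k ∈ Finset.range N, f ((W k ω).1)) ^ 2)
      atTop (𝓝 (I2 - I1 ^ 2)) := h4.sub (h2.pow 2)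
  have hlim := hnum.div hden hden_ne
  rw [hvc, hvf]
  have hval : (IG - I1 * I1) / (I2 - I1 ^ 2) = (IG - I1 ^ 2) / (I2 - I1 ^ 2) := by
    rw [sq I1]
  rw [← hval]
  simp only [hy, hy']
  exact hlim
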